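/- arXiv:2308.01585 — 2 statements merged into one kernel-verified Lean document; each statement's English description precedes it below -/
import Mathlib

section
/- (Algebraic form of the main recursion theorem.) Under the stated hypotheses, for every u < w the following formulae hold: D_{w,u} = S(U(R_{w,u})) and H_{w,u} = t^{−ℓ(u)} · (R_{w,u} − D_{w,u}), where R_{w,u} := t^{ℓ(u)} · (F_{w,u} − Σ_{u<v<w} D_{w,v}·H_{v,u}). -/
open LaurentPolynomial

/-- The coefficient of a Laurent polynomial `P = Σ a_α t^α` in degree `n`. -/
noncomputable def lcoeff (P : LaurentPolynomial ℤ) (n : ℤ) : ℤ := P.coeff n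

/-- Truncation operator `U_β : Σ_{α} a_α t^α ↦ Σ_{α ≥ β} a_α t^α`. -/
noncomputable def Utrunc (β : ℤ) (P : LaurentPolynomial ℤ) : LaurentPolynomial ℤ :=
  AddMonoidAlgebra.ofCoeff (Finsupp.filter (fun α => β ≤ α) P.coeff)

/-- Reflection `t ↦ t⁻¹` on Laurent polynomials. -/
noncomputable def reflect (p : LaurentPolynomial ℤ) : LaurentPolynomial ℤ :=
  AddMonoidAlgebra.ofCoeff (Finsupp.mapDomain (fun n => -n) p.coeff)

/-- Symmetrizing operator: for `p = Σ_{α ≥ 0} a_α t^α` (supported in nonnegative degrees),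
`S(p) = a_0 + Σ_{α > 0} a_α (t^α + t^{-α}) = p + Σ_{α > 0} a_α t^{-α}`. -/
noncomputable def Ssymm (p : LaurentPolynomial ℤ) : LaurentPolynomial ℤ :=
  p + reflect (Utrunc 1 p)

/-- A Laurent polynomial is symmetric if `a_α = a_{-α}` for all `α`. -/
def IsSymmL (P : LaurentPolynomial ℤ) : Prop := ∀ n : ℤ, lcoeff P n = lcoeff P (-n)

/-- A Laurent polynomial is negatively supported if `a_α = 0` for all `α ≥ 0`. -/
def NegSupp (P : LaurentPolynomial ℤ) : Prop := ∀ n : ℤ, 0 ≤ n → lcoeff P n = 0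

lemma reflect_apply (p : LaurentPolynomial ℤ) (n : ℤ) : (reflect p).coeff n = p.coeff (-n) := by
  have := Finsupp.mapDomain_apply (f := fun n : ℤ => -n) (fun a b h => by simpa using h) p.coeff (-n)
  simpa [reflect, AddMonoidAlgebra.coeff_ofCoeff] using this

lemma Utrunc_apply (β : ℤ) (p : LaurentPolynomial ℤ) (n : ℤ) :
    (Utrunc β p).coeff n = if β ≤ n then p.coeff n else 0 := by
  simp [Utrunc, Finsupp.filter_apply, AddMonoidAlgebra.coeff_ofCoeff]

lemma lp_add_apply (p q : LaurentPolynomial ℤ) (n : ℤ) : (p + q).coeff n = p.coeff n + q.coeff n :=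
  Finsupp.add_apply p.coeff q.coeff n

lemma Utrunc_add (β : ℤ) (p q : LaurentPolynomial ℤ) :
    Utrunc β (p + q) = Utrunc β p + Utrunc β q := by
  apply AddMonoidAlgebra.ext; apply Finsupp.ext; intro n
  rw [lp_add_apply]
  simp only [Utrunc_apply, lp_add_apply]
  split_ifs <;> simp

lemma Utrunc_eq_zero {N : LaurentPolynomial ℤ} (h : NegSupp N) : Utrunc 0 N = 0 := by
  apply AddMonoidAlgebra.ext; apply Finsupp.ext; intro n
  rw [Utrunc_apply]
  split_ifs with hn
  · exact h n hn
  · rfl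

lemma Ssymm_Utrunc {P : LaurentPolynomial ℤ} (h : IsSymmL P) : Ssymm (Utrunc 0 P) = P := by
  apply AddMonoidAlgebra.ext; apply Finsupp.ext; intro n
  show (Utrunc 0 P + reflect (Utrunc 1 (Utrunc 0 P))).coeff n = P.coeff n
  rw [lp_add_apply, reflect_apply]
  simp only [Utrunc_apply]
  have hn := h n
  simp only [lcoeff] at hn
  split_ifs with h1 h2 h3 <;> first
    | omega
    | simp
    | (simp; omega)
    | (simp only [zero_add]; rw [← hn])

/-- algebraic form of the main recursion theorem, Theorem 4.3 of the paper:
given a poset `X`, a length function `ℓ`, a fixed `w` with finite lower set, and families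
`F_{w,u}`, `D_{w,v}`, `H_{v,u}` of Laurent polynomials satisfying
(i) `F_{w,u} = Σ_{u ≤ v ≤ w} D_{w,v}·H_{v,u}`,
(ii) `D_{w,w} = 1` and `H_{u,u} = t^{-ℓ(u)}`,
(iii) each `D_{w,v}` is symmetric,
(iv) `t^{ℓ(u)}·H_{w,u}` is negatively supported for `u < w`,
then for every `u < w`, setting `R_{w,u} := t^{ℓ(u)}·(F_{w,u} - Σ_{u < v < w} D_{w,v}·H_{v,u})`,
we have `D_{w,u} = S(U(R_{w,u}))` and `H_{w,u} = t^{-ℓ(u)}·(R_{w,u} - D_{w,u})`. -/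
theorem decomposition_recursion {X : Type*} [PartialOrder X] (ℓ : X → ℤ) (w : X)
    (hfin : {v : X | v ≤ w}.Finite)
    (F : X → LaurentPolynomial ℤ) (D : X → LaurentPolynomial ℤ)
    (H : X → X → LaurentPolynomial ℤ)
    (hF : ∀ u, u ≤ w → F u = ∑ᶠ v ∈ Set.Icc u w, D v * H v u)
    (hDw : D w = 1)
    (hHdiag : ∀ u, u ≤ w → H u u = T (-(ℓ u)))
    (hDsymm : ∀ v, v ≤ w → IsSymmL (D v))
    (hHneg : ∀ u, u < w → NegSupp (T (ℓ u) * H w u)) :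
    ∀ u, u < w →
      ∀ R : LaurentPolynomial ℤ,
        R = T (ℓ u) * (F u - ∑ᶠ v ∈ Set.Ioo u w, D v * H v u) →
        D u = Ssymm (Utrunc 0 R) ∧ H w u = T (-(ℓ u)) * (R - D u) := by
  intro u hu R hR
  have hu' : u ≤ w := le_of_lt hu
  have hfinIoo : (Set.Ioo u w).Finite := hfin.subset (fun v hv => le_of_lt hv.2)
  have hsplit : Set.Icc u w = ({u} ∪ Set.Ioo u w) ∪ {w} := by
    ext v
    simp only [Set.mem_Icc, Set.mem_union, Set.mem_singleton_iff, Set.mem_Ioo]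
    constructor
    · rintro ⟨h1, h2⟩
      rcases eq_or_lt_of_le h2 with rfl | h2'
      · right; rfl
      rcases eq_or_lt_of_le h1 with rfl | h1'
      · left; left; rfl
      · left; right; exact ⟨h1', h2'⟩
    · rintro ((rfl | ⟨a, b⟩) | rfl)
      · exact ⟨le_refl _, hu'⟩
      · exact ⟨le_of_lt a, le_of_lt b⟩
      · exact ⟨hu', le_refl _⟩
  have disj1 : Disjoint ({u} : Set X) (Set.Ioo u w) := by
    simp [Set.disjoint_singleton_left, lt_irrefl]
  have disj2 : Disjoint (({u} : Set X) ∪ Set.Ioo u w) ({w} : Set X) := by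
    rw [Set.disjoint_singleton_right]
    simp only [Set.mem_union, Set.mem_singleton_iff, Set.mem_Ioo, not_or]
    exact ⟨fun h => absurd h.symm (ne_of_lt hu), fun h => absurd h.2 (lt_irrefl w)⟩
  have hsum : ∑ᶠ v ∈ Set.Icc u w, D v * H v u
      = D u * H u u + (∑ᶠ v ∈ Set.Ioo u w, D v * H v u) + D w * H w u := by
    rw [hsplit, finsum_mem_union disj2 ((Set.finite_singleton u).union hfinIoo)
        (Set.finite_singleton w),
      finsum_mem_union disj1 (Set.finite_singleton u) hfinIoo,
      finsum_mem_singleton, finsum_mem_singleton]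
  have hTT : T (ℓ u) * T (-(ℓ u)) = (1 : LaurentPolynomial ℤ) := by
    rw [← T_add]; simp
  have hRN : R = D u + T (ℓ u) * H w u := by
    rw [hR, hF u hu', hsum, hDw, hHdiag u hu']
    have : D u * T (-(ℓ u)) + (∑ᶠ v ∈ Set.Ioo u w, D v * H v u) + 1 * H w u
        - ∑ᶠ v ∈ Set.Ioo u w, D v * H v u = D u * T (-(ℓ u)) + H w u := by ring
    rw [this, mul_add, show T (ℓ u) * (D u * T (-(ℓ u))) = D u * (T (ℓ u) * T (-(ℓ u))) by ring,
      hTT, mul_one]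
  constructor
  · rw [hRN, Utrunc_add, Utrunc_eq_zero (hHneg u hu), add_zero,
      Ssymm_Utrunc (hDsymm u hu')]
  · rw [hRN, add_sub_cancel_left, show T (-(ℓ u)) * (T (ℓ u) * H w u)
      = (T (ℓ u) * T (-(ℓ u))) * H w u by ring, hTT, one_mul]
end

section
/- (Recursive determination / uniqueness.) Suppose (D, H) and (D′, H′) are two families of Laurent polynomials, both satisfying conditions (i)–(iv) of the stated system with the same family F. Then D_{v,u} = D′_{v,u} and H_{v,u} = H′_{v,u} for all pairs u ≤ v ≤ w; that is, the family F uniquely determines the families D and H. -/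
open LaurentPolynomial

lemma negSupp_sub {P Q : LaurentPolynomial ℤ} (hP : NegSupp P) (hQ : NegSupp Q) :
    NegSupp (P - Q) := by
  intro n hn
  have : lcoeff (P - Q) n = lcoeff P n - lcoeff Q n := Finsupp.sub_apply P.coeff Q.coeff n
  rw [this, hP n hn, hQ n hn, sub_zero]

lemma isSymmL_sub {P Q : LaurentPolynomial ℤ} (hP : IsSymmL P) (hQ : IsSymmL Q) :
    IsSymmL (P - Q) := by
  intro n
  have h1 : lcoeff (P - Q) n = lcoeff P n - lcoeff Q n := Finsupp.sub_apply P.coeff Q.coeff n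
  have h2 : lcoeff (P - Q) (-n) = lcoeff P (-n) - lcoeff Q (-n) := Finsupp.sub_apply P.coeff Q.coeff (-n)
  rw [h1, h2, hP n, hQ n]

lemma symm_negSupp_eq_zero {P : LaurentPolynomial ℤ} (h1 : IsSymmL P) (h2 : NegSupp P) :
    P = 0 := by
  apply AddMonoidAlgebra.ext
  apply Finsupp.ext
  intro n
  rcases le_or_gt 0 n with hn | hn
  · exact h2 n hn
  · have h3 : P.coeff (-n) = 0 := h2 (-n) (by omega)
    have h4 : P.coeff n = P.coeff (-n) := h1 n
    simp [h4, h3]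


/-- recursive determination / uniqueness: two pairs of families `(D, H)` and
`(D', H')` of Laurent polynomials indexed by pairs `u ≤ v ≤ w` in a poset with finite lower
set below `w`, both satisfying the system
(i) `F_{v,u} = Σ_{u ≤ x ≤ v} D_{v,x}·H_{x,u}` for all `u ≤ v ≤ w`,
(ii) `D_{v,v} = 1` and `H_{u,u} = t^{-ℓ(u)}` for all `v, u ≤ w`,
(iii) every `D_{v,u}` is symmetric,
(iv) `t^{ℓ(u)}·H_{v,u}` is negatively supported for all `u < v ≤ w`,
for the same family `F`, coincide: `D_{v,u} = D'_{v,u}` and `H_{v,u} = H'_{v,u}` for all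
`u ≤ v ≤ w`. -/
theorem recursion_uniqueness {X : Type*} [PartialOrder X] (ℓ : X → ℤ) (w : X)
    (hfin : {v : X | v ≤ w}.Finite)
    (F D H D' H' : X → X → LaurentPolynomial ℤ)
    (hF : ∀ u v, u ≤ v → v ≤ w → F v u = ∑ᶠ x ∈ Set.Icc u v, D v x * H x u)
    (hF' : ∀ u v, u ≤ v → v ≤ w → F v u = ∑ᶠ x ∈ Set.Icc u v, D' v x * H' x u)
    (hDdiag : ∀ v, v ≤ w → D v v = 1)
    (hDdiag' : ∀ v, v ≤ w → D' v v = 1)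
    (hHdiag : ∀ u, u ≤ w → H u u = T (-(ℓ u)))
    (hHdiag' : ∀ u, u ≤ w → H' u u = T (-(ℓ u)))
    (hDsymm : ∀ u v, u ≤ v → v ≤ w → IsSymmL (D v u))
    (hDsymm' : ∀ u v, u ≤ v → v ≤ w → IsSymmL (D' v u))
    (hHneg : ∀ u v, u < v → v ≤ w → NegSupp (T (ℓ u) * H v u))
    (hHneg' : ∀ u v, u < v → v ≤ w → NegSupp (T (ℓ u) * H' v u)) :
    ∀ u v, u ≤ v → v ≤ w → D v u = D' v u ∧ H v u = H' v u := by
  have main : ∀ n : ℕ, ∀ u v : X, u ≤ v → v ≤ w → (Set.Icc u v).ncard ≤ n →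
      D v u = D' v u ∧ H v u = H' v u := by
    intro n
    induction n with
    | zero =>
      intro u v huv hvw hcard
      exfalso
      have hI : (Set.Icc u v).Finite := hfin.subset (fun x hx => hx.2.trans hvw)
      have : 0 < (Set.Icc u v).ncard :=
        (Set.ncard_pos hI).mpr ⟨u, by simp [huv]⟩
      omega
    | succ n ih =>
      intro u v huv hvw hcard
      classical
      rcases eq_or_lt_of_le huv with rfl | hlt
      · exact ⟨by rw [hDdiag u hvw, hDdiag' u hvw], by rw [hHdiag u hvw, hHdiag' u hvw]⟩
      · have hI : (Set.Icc u v).Finite := hfin.subset (fun x hx => hx.2.trans hvw)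
        set s : Finset X := hI.toFinset with hs
        have hmem : ∀ x, x ∈ s ↔ u ≤ x ∧ x ≤ v := by
          intro x; rw [hs, Set.Finite.mem_toFinset, Set.mem_Icc]
        have hus : u ∈ s := (hmem u).mpr ⟨le_refl u, huv⟩
        have hvs : v ∈ s := (hmem v).mpr ⟨huv, le_refl v⟩
        have hune : u ≠ v := ne_of_lt hlt
        have huse : u ∈ s.erase v := Finset.mem_erase.mpr ⟨hune, hus⟩
        -- split sums
        have split : ∀ (DD HH : X → X → LaurentPolynomial ℤ),
            (∑ᶠ x ∈ Set.Icc u v, DD v x * HH x u) =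
            DD v v * HH v u + (DD v u * HH u u +
              ∑ x ∈ (s.erase v).erase u, DD v x * HH x u) := by
          intro DD HH
          rw [← hI.coe_toFinset, finsum_mem_coe_finset, ← hs]
          rw [← Finset.add_sum_erase s _ hvs, ← Finset.add_sum_erase (s.erase v) _ huse]
        -- middle sums agree by induction
        have mid : ∑ x ∈ (s.erase v).erase u, D v x * H x u =
            ∑ x ∈ (s.erase v).erase u, D' v x * H' x u := by
          apply Finset.sum_congr rfl
          intro x hx
          have hxu : x ≠ u := (Finset.mem_erase.mp hx).1
          have hxv : x ≠ v := (Finset.mem_erase.mp (Finset.mem_erase.mp hx).2).1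
          have hxs : x ∈ s := (Finset.mem_erase.mp (Finset.mem_erase.mp hx).2).2
          obtain ⟨hux, hxv'⟩ := (hmem x).mp hxs
          have hux' : u < x := lt_of_le_of_ne hux (Ne.symm hxu)
          have hxv'' : x < v := lt_of_le_of_ne hxv' hxv
          -- D v x = D' v x : use interval Icc x v
          have hssub1 : Set.Icc x v ⊂ Set.Icc u v := by
            constructor
            · intro y hy; exact ⟨hux.trans hy.1, hy.2⟩
            · intro hcon
              have := hcon ⟨le_refl u, huv⟩
              exact absurd this.1 (not_le_of_gt hux')
          have hc1 : (Set.Icc x v).ncard ≤ n := by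
            have := Set.ncard_lt_ncard hssub1 hI
            omega
          have hssub2 : Set.Icc u x ⊂ Set.Icc u v := by
            constructor
            · intro y hy; exact ⟨hy.1, hy.2.trans hxv'⟩
            · intro hcon
              have := hcon ⟨huv, le_refl v⟩
              exact absurd this.2 (not_le_of_gt hxv'')
          have hc2 : (Set.Icc u x).ncard ≤ n := by
            have := Set.ncard_lt_ncard hssub2 hI
            omega
          have hD := (ih x v hxv' hvw hc1).1
          have hH := (ih u x hux (hxv''.le.trans hvw) hc2).2
          rw [hD, hH]
        have huw : u ≤ w := huv.trans hvw
        have e1 := hF u v huv hvw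
        have e2 := hF' u v huv hvw
        rw [split D H, hDdiag v hvw, hHdiag u huw] at e1
        rw [split D' H', hDdiag' v hvw, hHdiag' u huw] at e2
        have e3 := e1.symm.trans e2
        rw [mid] at e3
        have key : (H v u - H' v u) + (D v u - D' v u) * T (-(ℓ u)) = 0 := by
          linear_combination e3
        have hT : T (ℓ u) * T (-(ℓ u)) = (1 : LaurentPolynomial ℤ) := by
          rw [← T_add]; simp
        have h3 : D' v u - D v u = T (ℓ u) * H v u - T (ℓ u) * H' v u := by
          linear_combination (- T (ℓ u)) * key + (D v u - D' v u) * hT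
        have hA0 : D' v u - D v u = 0 := by
          apply symm_negSupp_eq_zero
          · exact isSymmL_sub (hDsymm' u v huv hvw) (hDsymm u v huv hvw)
          · rw [h3]
            exact negSupp_sub (hHneg u v hlt hvw) (hHneg' u v hlt hvw)
        constructor
        · linear_combination -hA0
        · linear_combination key + T (-(ℓ u)) * hA0
  intro u v huv hvw
  exact main (Set.Icc u v).ncard u v huv hvw le_rfl
end
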